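/- Let α, γ > 0 and β ∈ ℝ with Q := β/√(αγ) satisfying 0 ≤ Q ≤ 3. Then for all ξ, η ∈ ℝ², Re A(ξ + iη) ≥ -8 A(η), where A(z) = α z₁⁴ + 2β z₁² z₂² + γ z₂⁴. -/
import Mathlib


open Complex

/-- For `α, γ > 0`, `Q = β/√(αγ) ∈ [0,3]`, and all `ξ, η ∈ ℝ²`,
`Re A(ξ+iη) ≥ -8 A(η)`. -/
theorem stmt1 (α β γ : ℝ) (hα : 0 < α) (hγ : 0 < γ)
    (hQ1 : 0 ≤ β / Real.sqrt (α * γ)) (hQ2 : β / Real.sqrt (α * γ) ≤ 3)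
    (ξ1 ξ2 η1 η2 : ℝ) :
    ((α : ℂ) * (ξ1 + η1 * I) ^ 4 + 2 * β * (ξ1 + η1 * I) ^ 2 * (ξ2 + η2 * I) ^ 2
        + γ * (ξ2 + η2 * I) ^ 4).re
      ≥ -8 * (α * η1 ^ 4 + 2 * β * η1 ^ 2 * η2 ^ 2 + γ * η2 ^ 4) := by
  have hs : 0 < Real.sqrt (α * γ) := Real.sqrt_pos.2 (by positivity)
  set s := Real.sqrt (α * γ) with hsdef
  have hs2 : s ^ 2 = α * γ := Real.sq_sqrt (by positivity)
  have hβ0 : 0 ≤ β := by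
    have h := mul_nonneg hQ1 hs.le
    rwa [div_mul_cancel₀ _ hs.ne'] at h
  have hβ3 : β ≤ 3 * s := by
    have := (div_le_iff₀ hs).1 hQ2
    linarith
  set X := ξ1 ^ 2 - 3 * η1 ^ 2 with hX
  set Y := ξ2 ^ 2 - 3 * η2 ^ 2 with hY
  set W := ξ1 * η2 - ξ2 * η1 with hW
  have hre : ((α : ℂ) * (ξ1 + η1 * I) ^ 4 + 2 * β * (ξ1 + η1 * I) ^ 2 * (ξ2 + η2 * I) ^ 2
        + γ * (ξ2 + η2 * I) ^ 4).re
      = α * X ^ 2 + 2 * β * (X * Y) + γ * Y ^ 2 + 4 * β * W ^ 2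
        - 8 * (α * η1 ^ 4 + 2 * β * η1 ^ 2 * η2 ^ 2 + γ * η2 ^ 4) := by
    simp [Complex.add_re, Complex.add_im, Complex.mul_re, Complex.mul_im, pow_succ,
      Complex.ofReal_re, Complex.ofReal_im, Complex.I_re, Complex.I_im, hX, hY, hW]
    ring
  rw [hre]
  have hZ : X * Y + 3 * W ^ 2 = (ξ1 * ξ2 - 3 * η1 * η2) ^ 2 := by
    rw [hX, hY, hW]; ring
  suffices h : 0 ≤ α * X ^ 2 + 2 * β * (X * Y) + γ * Y ^ 2 + 4 * β * W ^ 2 by linarith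
  rcases le_or_gt 0 (X * Y + 2 * W ^ 2) with h | h
  · nlinarith [sq_nonneg X, sq_nonneg Y, mul_nonneg hβ0 h, hα.le, hγ.le,
      mul_nonneg hα.le (sq_nonneg X), mul_nonneg hγ.le (sq_nonneg Y)]
  · have key : γ * (α * X ^ 2 + γ * Y ^ 2 + 2 * s * (X * Y)) = (s * X + γ * Y) ^ 2 := by
      linear_combination (-X ^ 2) * hs2
    have h1 : 0 ≤ α * X ^ 2 + γ * Y ^ 2 + 2 * s * (X * Y) := by
      nlinarith [sq_nonneg (s * X + γ * Y), key, hγ]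
    have hp : 0 ≤ (3 * s - β) * (-(X * Y + 2 * W ^ 2)) :=
      mul_nonneg (by linarith) (by linarith)
    have hZ' : 0 ≤ 4 * s * (X * Y + 3 * W ^ 2) := by
      rw [hZ]; positivity
    nlinarith [h1, hp, hZ']
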